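/- arXiv:1312.5972 — 4 statements merged into one kernel-verified Lean document; each statement's English description precedes it below -/
import Mathlib

section
/- Let P = {x ∈ [0,1]^7 : Σ_{i=1}^7 2x_i ≤ 7}. Then P_I = {x ∈ [0,1]^7 : Σ_{i=1}^7 x_i ≤ 3}. -/
open Finset

private lemma int_sum_nat (s : Finset (Fin 7)) (x : Fin 7 → ℝ)
    (h : ∀ i ∈ s, x i = 0 ∨ x i = 1) : ∃ m : ℕ, ∑ i ∈ s, x i = m := by
  classical
  induction s using Finset.induction with
  | empty => exact ⟨0, by simp⟩
  | @insert a s hi ih =>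
    obtain ⟨m, hm⟩ := ih (fun i hmem => h i (Finset.mem_insert_of_mem hmem))
    rcases h a (Finset.mem_insert_self _ _) with h0 | h1
    · exact ⟨m, by rw [Finset.sum_insert hi, h0, hm]; simp⟩
    · exact ⟨m + 1, by rw [Finset.sum_insert hi, h1, hm]; push_cast; ring⟩

private lemma key : ∀ n : ℕ, ∀ x : Fin 7 → ℝ, (∀ i, 0 ≤ x i ∧ x i ≤ 1) → ∑ i, x i ≤ 3 →
    (Finset.univ.filter (fun i => x i ≠ 0 ∧ x i ≠ 1)).card ≤ n →
    x ∈ convexHull ℝ ({x : Fin 7 → ℝ | (∀ i, 0 ≤ x i ∧ x i ≤ 1) ∧ ∑ i, 2 * x i ≤ 7}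
        ∩ {x | ∀ i, x i = 0 ∨ x i = 1}) := by
  classical
  intro n
  induction n with
  | zero =>
    intro x hbox hsum hcard
    apply subset_convexHull
    have hint : ∀ i, x i = 0 ∨ x i = 1 := by
      intro i
      by_contra hc
      push_neg at hc
      have : i ∈ Finset.univ.filter (fun i => x i ≠ 0 ∧ x i ≠ 1) := by
        simp [hc.1, hc.2]
      have := Finset.card_pos.mpr ⟨i, this⟩
      omega
    refine ⟨⟨hbox, ?_⟩, hint⟩
    have : ∑ i, 2 * x i = 2 * ∑ i, x i := by rw [Finset.mul_sum]
    rw [this]; linarith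
  | succ n ih =>
    intro x hbox hsum hcard
    set F := Finset.univ.filter (fun i => x i ≠ 0 ∧ x i ≠ 1) with hF
    rcases Nat.lt_or_ge F.card (n + 1) with hlt | hge
    · exact ih x hbox hsum (by rw [← hF]; omega)
    have hFcard : F.card = n + 1 := le_antisymm hcard hge
    have hFne : F.Nonempty := Finset.card_pos.mp (by omega)
    obtain ⟨i, hi⟩ := hFne
    have hxi : x i ≠ 0 ∧ x i ≠ 1 := by simpa [hF] using hi
    have hxi0 : 0 < x i := lt_of_le_of_ne (hbox i).1 (Ne.symm hxi.1)
    have hxi1 : x i < 1 := lt_of_le_of_ne (hbox i).2 hxi.2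
    rcases Finset.eq_empty_or_nonempty (F.erase i) with her | ⟨j, hj⟩
    · -- only one fractional coordinate
      have hint : ∀ k, k ≠ i → x k = 0 ∨ x k = 1 := by
        intro k hk
        by_contra hc
        push_neg at hc
        have hkF : k ∈ F := by simp [hF, hc.1, hc.2]
        have : k ∈ F.erase i := Finset.mem_erase.mpr ⟨hk, hkF⟩
        simp [her] at this
      obtain ⟨m, hm⟩ := int_sum_nat (Finset.univ.erase i) x
        (fun k hk => hint k (Finset.ne_of_mem_erase hk))
      have hsplit : ∑ k, x k = x i + ∑ k ∈ Finset.univ.erase i, x k :=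
        (Finset.add_sum_erase _ _ (Finset.mem_univ i)).symm
      have hm3 : (m : ℝ) < 3 := by
        rw [hsplit, hm] at hsum; linarith
      have hm2 : (m : ℕ) ≤ 2 := by exact_mod_cast Nat.lt_succ_iff.mp (by exact_mod_cast hm3)
      set y0 := Function.update x i 0 with hy0
      set y1 := Function.update x i 1 with hy1
      have hS := convex_convexHull ℝ ({x : Fin 7 → ℝ | (∀ i, 0 ≤ x i ∧ x i ≤ 1) ∧ ∑ i, 2 * x i ≤ 7}
        ∩ {x | ∀ i, x i = 0 ∨ x i = 1})
      rw [Finset.erase_eq] at hm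
      have hy0sum : ∑ k, y0 k = (m : ℝ) := by
        rw [hy0, Finset.sum_update_of_mem (Finset.mem_univ i), hm]; ring
      have hy1sum : ∑ k, y1 k = (m : ℝ) + 1 := by
        rw [hy1, Finset.sum_update_of_mem (Finset.mem_univ i), hm]; ring
      have hy0mem : y0 ∈ ({x : Fin 7 → ℝ | (∀ i, 0 ≤ x i ∧ x i ≤ 1) ∧ ∑ i, 2 * x i ≤ 7}
          ∩ {x | ∀ i, x i = 0 ∨ x i = 1}) := by
        refine ⟨⟨fun k => ?_, ?_⟩, fun k => ?_⟩
        · rcases eq_or_ne k i with rfl | hk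
          · simp [hy0]
          · simpa [hy0, Function.update_apply, hk] using hbox k
        · rw [show ∑ k, 2 * y0 k = 2 * ∑ k, y0 k from (Finset.mul_sum _ _ _).symm, hy0sum]
          push_cast; linarith [hm2]
        · rcases eq_or_ne k i with rfl | hk
          · simp [hy0]
          · simpa [hy0, Function.update_apply, hk] using hint k hk
      have hy1mem : y1 ∈ ({x : Fin 7 → ℝ | (∀ i, 0 ≤ x i ∧ x i ≤ 1) ∧ ∑ i, 2 * x i ≤ 7}
          ∩ {x | ∀ i, x i = 0 ∨ x i = 1}) := by
        refine ⟨⟨fun k => ?_, ?_⟩, fun k => ?_⟩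
        · rcases eq_or_ne k i with rfl | hk
          · simp [hy1]
          · simpa [hy1, Function.update_apply, hk] using hbox k
        · rw [show ∑ k, 2 * y1 k = 2 * ∑ k, y1 k from (Finset.mul_sum _ _ _).symm, hy1sum]
          push_cast
          have : (m : ℝ) ≤ 2 := by exact_mod_cast hm2
          linarith
        · rcases eq_or_ne k i with rfl | hk
          · simp [hy1]
          · simpa [hy1, Function.update_apply, hk] using hint k hk
      have hcomb : x = (1 - x i) • y0 + (x i) • y1 := by
        funext k
        rcases eq_or_ne k i with rfl | hk
        · simp [hy0, hy1]
        · simp [hy0, hy1, Function.update_apply, hk]; ring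
      rw [hcomb]
      exact hS (subset_convexHull _ _ hy0mem) (subset_convexHull _ _ hy1mem)
        (by linarith) (by linarith) (by ring)
    · -- at least two fractional coordinates
      have hji : j ≠ i := (Finset.mem_erase.mp hj).1
      have hjF : j ∈ F := (Finset.mem_erase.mp hj).2
      have hxj : x j ≠ 0 ∧ x j ≠ 1 := by simpa [hF] using hjF
      have hxj0 : 0 < x j := lt_of_le_of_ne (hbox j).1 (Ne.symm hxj.1)
      have hxj1 : x j < 1 := lt_of_le_of_ne (hbox j).2 hxj.2
      set t1 := min (1 - x i) (x j) with ht1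
      set t2 := min (x i) (1 - x j) with ht2
      have ht1pos : 0 < t1 := lt_min (by linarith) hxj0
      have ht2pos : 0 < t2 := lt_min hxi0 (by linarith)
      set d : Fin 7 → ℝ := fun k => if k = i then 1 else if k = j then -1 else 0 with hd
      have hdi : d i = 1 := by simp [hd]
      have hdj : d j = -1 := by simp [hd, hji]
      have hdk : ∀ k, k ≠ i → k ≠ j → d k = 0 := by
        intro k hki hkj; simp [hd, hki, hkj]
      have hdsum : ∑ k, d k = 0 := by
        rw [← Finset.add_sum_erase _ d (Finset.mem_univ i),
            ← Finset.add_sum_erase _ d (Finset.mem_erase.mpr ⟨hji, Finset.mem_univ j⟩)]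
        have hz : ∑ k ∈ (Finset.univ.erase i).erase j, d k = 0 :=
          Finset.sum_eq_zero (fun k hk => hdk k
            (Finset.ne_of_mem_erase (Finset.mem_of_mem_erase hk)) (Finset.ne_of_mem_erase hk))
        rw [hdi, hdj, hz]; ring
      set u : Fin 7 → ℝ := fun k => x k + t1 * d k with hu
      set v : Fin 7 → ℝ := fun k => x k - t2 * d k with hv
      have ht1i : t1 ≤ 1 - x i := min_le_left _ _
      have ht1j : t1 ≤ x j := min_le_right _ _
      have ht2i : t2 ≤ x i := min_le_left _ _
      have ht2j : t2 ≤ 1 - x j := min_le_right _ _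
      -- box constraints
      have hubox : ∀ k, 0 ≤ u k ∧ u k ≤ 1 := by
        intro k
        rcases eq_or_ne k i with rfl | hki
        · rw [hu]; simp only [hdi]; constructor <;> nlinarith
        rcases eq_or_ne k j with rfl | hkj
        · rw [hu]; simp only [hdj]; constructor <;> nlinarith
        · rw [hu]; simp only [hdk k hki hkj]; simpa using hbox k
      have hvbox : ∀ k, 0 ≤ v k ∧ v k ≤ 1 := by
        intro k
        rcases eq_or_ne k i with rfl | hki
        · rw [hv]; simp only [hdi]; constructor <;> nlinarith
        rcases eq_or_ne k j with rfl | hkj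
        · rw [hv]; simp only [hdj]; constructor <;> nlinarith
        · rw [hv]; simp only [hdk k hki hkj]; simpa using hbox k
      have husum : ∑ k, u k ≤ 3 := by
        have : ∑ k, u k = ∑ k, x k + t1 * ∑ k, d k := by
          rw [hu, Finset.sum_add_distrib, Finset.mul_sum]
        rw [this, hdsum]; linarith
      have hvsum : ∑ k, v k ≤ 3 := by
        have : ∑ k, v k = ∑ k, x k - t2 * ∑ k, d k := by
          rw [hv, Finset.sum_sub_distrib, Finset.mul_sum]
        rw [this, hdsum]; linarith
      -- fractional counts decrease
      have hsub : ∀ (w : Fin 7 → ℝ), (∀ k, k ≠ i → k ≠ j → w k = x k) →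
          ((w i = 0 ∨ w i = 1) ∨ (w j = 0 ∨ w j = 1)) →
          (Finset.univ.filter (fun k => w k ≠ 0 ∧ w k ≠ 1)).card ≤ n := by
        intro w hwk hcases
        rcases hcases with hwi | hwj
        · have : (Finset.univ.filter (fun k => w k ≠ 0 ∧ w k ≠ 1)) ⊆ F.erase i := by
            intro k hk
            simp only [Finset.mem_filter, Finset.mem_univ, true_and] at hk
            have hki : k ≠ i := by rintro rfl; tauto
            rcases eq_or_ne k j with rfl | hkj
            · exact Finset.mem_erase.mpr ⟨hki, hjF⟩
            · rw [hwk k hki hkj] at hk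
              exact Finset.mem_erase.mpr ⟨hki, by simp [hF, hk.1, hk.2]⟩
          calc _ ≤ (F.erase i).card := Finset.card_le_card this
            _ = F.card - 1 := Finset.card_erase_of_mem hi
            _ ≤ n := by omega
        · have : (Finset.univ.filter (fun k => w k ≠ 0 ∧ w k ≠ 1)) ⊆ F.erase j := by
            intro k hk
            simp only [Finset.mem_filter, Finset.mem_univ, true_and] at hk
            have hkj : k ≠ j := by rintro rfl; tauto
            rcases eq_or_ne k i with rfl | hki
            · exact Finset.mem_erase.mpr ⟨hji.symm, hi⟩
            · rw [hwk k hki hkj] at hk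
              exact Finset.mem_erase.mpr ⟨hkj, by simp [hF, hk.1, hk.2]⟩
          calc _ ≤ (F.erase j).card := Finset.card_le_card this
            _ = F.card - 1 := Finset.card_erase_of_mem hjF
            _ ≤ n := by omega
      have hucard : (Finset.univ.filter (fun k => u k ≠ 0 ∧ u k ≠ 1)).card ≤ n := by
        apply hsub u (fun k hki hkj => by rw [hu]; simp [hdk k hki hkj])
        rcases min_cases (1 - x i) (x j) with ⟨he, _⟩ | ⟨he, _⟩
        · left; right; show x i + t1 * d i = 1; rw [hdi]; linarith
        · right; left; show x j + t1 * d j = 0; rw [hdj]; linarith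
      have hvcard : (Finset.univ.filter (fun k => v k ≠ 0 ∧ v k ≠ 1)).card ≤ n := by
        apply hsub v (fun k hki hkj => by rw [hv]; simp [hdk k hki hkj])
        rcases min_cases (x i) (1 - x j) with ⟨he, _⟩ | ⟨he, _⟩
        · left; left; show x i - t2 * d i = 0; rw [hdi]; linarith
        · right; right; show x j - t2 * d j = 1; rw [hdj]; linarith
      have humem := ih u hubox husum hucard
      have hvmem := ih v hvbox hvsum hvcard
      have hS := convex_convexHull ℝ ({x : Fin 7 → ℝ | (∀ i, 0 ≤ x i ∧ x i ≤ 1) ∧ ∑ i, 2 * x i ≤ 7}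
        ∩ {x | ∀ i, x i = 0 ∨ x i = 1})
      have hst : 0 < t1 + t2 := by linarith
      have hcomb : x = (t2 / (t1 + t2)) • u + (t1 / (t1 + t2)) • v := by
        funext k
        simp only [Pi.add_apply, Pi.smul_apply, smul_eq_mul, hu, hv]
        field_simp
        ring
      rw [hcomb]
      exact hS humem hvmem (by positivity) (by positivity)
        (by field_simp; ring)

/-- For `P = {x ∈ [0,1]^7 : Σ_i 2x_i ≤ 7}`, the integer hull of `P` is
`{x ∈ [0,1]^7 : Σ_i x_i ≤ 3}`. -/
theorem stmt_9 :
    convexHull ℝ ({x : Fin 7 → ℝ | (∀ i, 0 ≤ x i ∧ x i ≤ 1) ∧ ∑ i, 2 * x i ≤ 7}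
        ∩ {x | ∀ i, x i = 0 ∨ x i = 1})
      = {x : Fin 7 → ℝ | (∀ i, 0 ≤ x i ∧ x i ≤ 1) ∧ ∑ i, x i ≤ 3} := by
  apply Set.Subset.antisymm
  · apply convexHull_min
    · rintro x ⟨⟨hbox, hsum⟩, hint⟩
      refine ⟨hbox, ?_⟩
      obtain ⟨m, hm⟩ := int_sum_nat Finset.univ x (fun i _ => hint i)
      have : ∑ i, 2 * x i = 2 * ∑ i, x i := by rw [Finset.mul_sum]
      rw [this, hm] at hsum
      have hm3 : (m : ℕ) ≤ 3 := by
        by_contra h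
        push_neg at h
        have : (4 : ℝ) ≤ (m : ℝ) := by exact_mod_cast h
        linarith
      rw [hm]
      exact_mod_cast hm3
    · rintro x ⟨hbx, hsx⟩ y ⟨hby, hsy⟩ a b ha hb hab
      refine ⟨fun i => ?_, ?_⟩
      · simp only [Pi.add_apply, Pi.smul_apply, smul_eq_mul]
        constructor
        · nlinarith [(hbx i).1, (hby i).1]
        · nlinarith [(hbx i).2, (hby i).2]
      · have : ∑ i, (a • x + b • y) i = a * ∑ i, x i + b * ∑ i, y i := by
          simp [Finset.sum_add_distrib, Finset.mul_sum]
        rw [this]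
        nlinarith
  · intro x hx
    exact key 7 x hx.1 hx.2 (le_trans (Finset.card_filter_le _ _) (by simp))
end

section
/- Let n, k be natural numbers and x ∈ [0,1]^n. Define the matrix M indexed by subsets S, T ⊆ [n] of size at most k by M[S,T] = ∏_{i ∈ S∪T} x_i. Then M is symmetric positive semidefinite. -/
/-- For `x ∈ [0,1]^n`, the matrix indexed by subsets `S, T ⊆ [n]` of size at most `k`
given by `M[S,T] = ∏_{i ∈ S∪T} x_i` is symmetric positive semidefinite. -/
theorem stmt_12 (n k : ℕ) (x : Fin n → ℝ) (hx : ∀ i, 0 ≤ x i ∧ x i ≤ 1) :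
    Matrix.PosSemidef
      (Matrix.of (fun S T : {S : Finset (Fin n) // S.card ≤ k} => ∏ i ∈ S.1 ∪ T.1, x i)) := by
  set wt : Finset (Fin n) → ℝ := fun W => (∏ i ∈ W, x i) * ∏ i ∈ Wᶜ, (1 - x i) with hwt
  have hwt0 : ∀ W, 0 ≤ wt W := by
    intro W
    apply mul_nonneg <;> apply Finset.prod_nonneg <;> intro i _
    · exact (hx i).1
    · linarith [(hx i).2]
  have key : ∀ A : Finset (Fin n), ∏ i ∈ A, x i
      = ∑ W : Finset (Fin n), if A ⊆ W then wt W else 0 := by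
    intro A
    rw [← Finset.sum_filter]
    have hbij : ∑ W ∈ Finset.univ.filter (fun W => A ⊆ W), wt W
        = ∑ W' ∈ Aᶜ.powerset, wt (A ∪ W') := by
      refine Finset.sum_nbij' (fun W => W \ A) (fun W' => A ∪ W') ?_ ?_ ?_ ?_ ?_
      · intro W hW
        simp only [Finset.mem_filter, Finset.mem_univ, true_and] at hW
        simp only [Finset.mem_powerset]
        intro i hi
        simp only [Finset.mem_sdiff] at hi
        simp [Finset.mem_compl, hi.2]
      · intro W' _
        simp
      · intro W hW
        simp only [Finset.mem_filter, Finset.mem_univ, true_and] at hW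
        exact Finset.union_sdiff_of_subset hW
      · intro W' hW'
        simp only [Finset.mem_powerset] at hW'
        apply Finset.union_sdiff_cancel_left
        rw [Finset.disjoint_left]
        intro a ha haW'
        exact (Finset.mem_compl.mp (hW' haW')) ha
      · intro W hW
        simp only [Finset.mem_filter, Finset.mem_univ, true_and] at hW
        rw [Finset.union_sdiff_of_subset hW]
    rw [hbij]
    have hdisj : ∀ W' ∈ Aᶜ.powerset, wt (A ∪ W')
        = (∏ i ∈ A, x i) * ((∏ i ∈ W', x i) * ∏ i ∈ Aᶜ \ W', (1 - x i)) := by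
      intro W' hW'
      simp only [Finset.mem_powerset] at hW'
      have hd : Disjoint A W' := by
        rw [Finset.disjoint_left]
        intro a ha haW'
        exact (Finset.mem_compl.mp (hW' haW')) ha
      have hc : (A ∪ W')ᶜ = Aᶜ \ W' := by
        ext i
        simp only [Finset.mem_compl, Finset.mem_union, Finset.mem_sdiff, not_or]
      simp only [hwt, hc, Finset.prod_union hd]
      ring
    rw [Finset.sum_congr rfl hdisj, ← Finset.mul_sum, ← Finset.prod_add]
    simp
  rw [Matrix.posSemidef_iff_dotProduct_mulVec]
  constructor
  · ext S T
    simp only [Matrix.conjTranspose_apply, Matrix.of_apply, star_trivial]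
    rw [Finset.union_comm]
  · intro v
    have expand : dotProduct (star v) ((Matrix.of (fun S T : {S : Finset (Fin n) // S.card ≤ k}
          => ∏ i ∈ S.1 ∪ T.1, x i)).mulVec v)
        = ∑ W : Finset (Fin n), wt W
            * (∑ S : {S : Finset (Fin n) // S.card ≤ k}, if S.1 ⊆ W then v S else 0) ^ 2 := by
      simp only [dotProduct, Matrix.mulVec, Matrix.of_apply, star_trivial,
        Pi.star_apply]
      calc ∑ S, v S * ∑ T, (∏ i ∈ S.1 ∪ T.1, x i) * v T
          = ∑ S, ∑ T, ∑ W : Finset (Fin n),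
              v S * ((if S.1 ∪ T.1 ⊆ W then wt W else 0) * v T) := by
            refine Finset.sum_congr rfl fun S _ => ?_
            rw [Finset.mul_sum]
            refine Finset.sum_congr rfl fun T _ => ?_
            rw [key (S.1 ∪ T.1), Finset.sum_mul, Finset.mul_sum]
        _ = ∑ S, ∑ W : Finset (Fin n), ∑ T,
              v S * ((if S.1 ∪ T.1 ⊆ W then wt W else 0) * v T) :=
            Finset.sum_congr rfl fun S _ => Finset.sum_comm
        _ = ∑ W : Finset (Fin n), ∑ S, ∑ T,
              v S * ((if S.1 ∪ T.1 ⊆ W then wt W else 0) * v T) := Finset.sum_comm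
        _ = ∑ W : Finset (Fin n), wt W
              * (∑ S : {S : Finset (Fin n) // S.card ≤ k}, if S.1 ⊆ W then v S else 0) ^ 2 := by
            refine Finset.sum_congr rfl fun W _ => ?_
            rw [sq, Finset.sum_mul_sum, Finset.mul_sum]
            refine Finset.sum_congr rfl fun S _ => ?_
            rw [Finset.mul_sum]
            refine Finset.sum_congr rfl fun T _ => ?_
            simp only [Finset.union_subset_iff]
            by_cases h1 : S.1 ⊆ W <;> by_cases h2 : T.1 ⊆ W <;>
              simp [h1, h2] <;> ring
    rw [expand]
    exact Finset.sum_nonneg fun W _ => mul_nonneg (hwt0 W) (sq_nonneg _)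
end

section
/- Let ℓ ≥ 1 and let Y be a real symmetric positive semidefinite matrix whose rows and columns are indexed by the subsets of [n] of size at most ℓ, satisfying: Y[∅,∅] = 1; Y[S,T] = Y[S',T'] whenever S ∪ T = S' ∪ T'; and 0 ≤ Y[S,T] ≤ Y[∅,T] for all S, T. Define y_W = Y[S,T] for any S,T with S ∪ T = W (well-defined for |W| ≤ 2ℓ) and Z_i = Σ_{W ⊆ [n], |W| = i} y_W. If Z_i = 0 for all i with ℓ < i ≤ 2ℓ, then Z_1 ≤ ℓ. -/
noncomputable def auxF (ℓ : ℕ) : ℕ → ℝ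
  | w => Real.sqrt ((ℓ : ℝ) * ((ℓ : ℝ) - w)) -
      ∑ s ∈ (Finset.range w).attach, ((w.choose s.1 : ℝ)) * auxF ℓ s.1
termination_by w => w
decreasing_by exact Finset.mem_range.mp s.2

theorem auxG (ℓ : ℕ) (w : ℕ) :
    ∑ s ∈ Finset.range (w + 1), (w.choose s : ℝ) * auxF ℓ s
      = Real.sqrt ((ℓ : ℝ) * ((ℓ : ℝ) - w)) := by
  rw [Finset.sum_range_succ, auxF, Finset.sum_attach (Finset.range w)
    (fun s => (w.choose s : ℝ) * auxF ℓ s)]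
  simp

theorem auxPow (ℓ : ℕ) {n : ℕ} (W : Finset (Fin n)) :
    ∑ S ∈ W.powerset, auxF ℓ S.card = Real.sqrt ((ℓ : ℝ) * ((ℓ : ℝ) - W.card)) := by
  rw [Finset.sum_powerset, ← auxG ℓ W.card]
  refine Finset.sum_congr rfl fun j hj => ?_
  rw [Finset.sum_congr rfl (fun t ht => by rw [(Finset.mem_powersetCard.mp ht).2]),
    Finset.sum_const, Finset.card_powersetCard, nsmul_eq_mul]

noncomputable def auxC (ℓ : ℕ) : ℕ → ℝ :=
  fun v => if v = 0 then (ℓ : ℝ) ^ 2 else if v = 1 then -(ℓ : ℝ) else 0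

theorem auxCsum (ℓ : ℕ) {n : ℕ} (W : Finset (Fin n)) :
    ∑ V ∈ W.powerset, auxC ℓ V.card = (ℓ : ℝ) ^ 2 - W.card * ℓ := by
  rw [Finset.sum_powerset]
  have h1 : ∀ j ∈ Finset.range (W.card + 1),
      ∑ t ∈ Finset.powersetCard j W, auxC ℓ t.card
        = (W.card.choose j : ℝ) * auxC ℓ j := by
    intro j hj
    rw [Finset.sum_congr rfl (fun t ht => by rw [(Finset.mem_powersetCard.mp ht).2]),
      Finset.sum_const, Finset.card_powersetCard, nsmul_eq_mul]
  rw [Finset.sum_congr rfl h1]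
  have h2 : ∀ j ∈ Finset.range (W.card + 1),
      (W.card.choose j : ℝ) * auxC ℓ j
        = (if j = 0 then (ℓ : ℝ) ^ 2 else 0) + (if j = 1 then -((W.card : ℝ) * ℓ) else 0) := by
    intro j hj
    unfold auxC
    rcases j with _ | _ | j <;> simp
  rw [Finset.sum_congr rfl h2, Finset.sum_add_distrib,
    Finset.sum_ite_eq' (Finset.range (W.card + 1)) 0 (fun _ => (ℓ : ℝ) ^ 2),
    Finset.sum_ite_eq' (Finset.range (W.card + 1)) 1 (fun _ => -((W.card : ℝ) * ℓ))]
  rcases Nat.eq_zero_or_pos W.card with h | h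
  · simp [h]
  · have h1m : (1 : ℕ) ∈ Finset.range (W.card + 1) := Finset.mem_range.mpr (Nat.succ_lt_succ h)
    rw [if_pos (Finset.mem_range.mpr (by omega : 0 < W.card + 1)), if_pos h1m]
    ring

theorem auxUnion (ℓ : ℕ) {n : ℕ} (W : Finset (Fin n)) (hW : W.card ≤ ℓ) :
    ∑ p ∈ (W.powerset ×ˢ W.powerset).filter (fun p => p.1 ∪ p.2 = W),
      auxF ℓ p.1.card * auxF ℓ p.2.card = auxC ℓ W.card := by
  induction W using Finset.strongInduction with
  | _ W ih =>
  have hnn : (0:ℝ) ≤ (ℓ : ℝ) * ((ℓ : ℝ) - W.card) :=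
    mul_nonneg (Nat.cast_nonneg ℓ) (by
      rw [sub_nonneg]; exact_mod_cast hW)
  have hsq : ∑ p ∈ W.powerset ×ˢ W.powerset, auxF ℓ p.1.card * auxF ℓ p.2.card
      = (ℓ : ℝ) ^ 2 - W.card * ℓ := by
    calc ∑ p ∈ W.powerset ×ˢ W.powerset, auxF ℓ p.1.card * auxF ℓ p.2.card
        = (∑ S ∈ W.powerset, auxF ℓ S.card) * (∑ T ∈ W.powerset, auxF ℓ T.card) := by
          rw [Finset.sum_mul_sum, Finset.sum_product]
      _ = (ℓ : ℝ) * ((ℓ : ℝ) - W.card) := by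
          rw [auxPow ℓ W, Real.mul_self_sqrt hnn]
      _ = (ℓ : ℝ) ^ 2 - W.card * ℓ := by ring
  have hmaps : ∀ p ∈ W.powerset ×ˢ W.powerset, p.1 ∪ p.2 ∈ W.powerset := by
    intro p hp
    rw [Finset.mem_product] at hp
    exact Finset.mem_powerset.mpr (Finset.union_subset (Finset.mem_powerset.mp hp.1)
      (Finset.mem_powerset.mp hp.2))
  have hfib : ∑ V ∈ W.powerset,
      ∑ p ∈ (W.powerset ×ˢ W.powerset).filter (fun p => p.1 ∪ p.2 = V),
        auxF ℓ p.1.card * auxF ℓ p.2.card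
      = ∑ p ∈ W.powerset ×ˢ W.powerset, auxF ℓ p.1.card * auxF ℓ p.2.card :=
    Finset.sum_fiberwise_of_maps_to hmaps _
  have hfix : ∀ V, V ∈ W.powerset →
      (W.powerset ×ˢ W.powerset).filter (fun p => p.1 ∪ p.2 = V)
        = (V.powerset ×ˢ V.powerset).filter (fun p => p.1 ∪ p.2 = V) := by
    intro V hV
    rw [Finset.mem_powerset] at hV
    ext p
    simp only [Finset.mem_filter, Finset.mem_product, Finset.mem_powerset]
    constructor
    · rintro ⟨⟨_, _⟩, hu⟩
      exact ⟨⟨hu ▸ Finset.subset_union_left, hu ▸ Finset.subset_union_right⟩, hu⟩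
    · rintro ⟨⟨h1, h2⟩, hu⟩
      exact ⟨⟨h1.trans hV, h2.trans hV⟩, hu⟩
  have hWmem : W ∈ W.powerset := Finset.mem_powerset_self W
  have key : ∑ V ∈ W.powerset,
      ∑ p ∈ (V.powerset ×ˢ V.powerset).filter (fun p => p.1 ∪ p.2 = V),
        auxF ℓ p.1.card * auxF ℓ p.2.card = ∑ V ∈ W.powerset, auxC ℓ V.card := by
    rw [show (∑ V ∈ W.powerset,
        ∑ p ∈ (V.powerset ×ˢ V.powerset).filter (fun p => p.1 ∪ p.2 = V),
          auxF ℓ p.1.card * auxF ℓ p.2.card)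
      = ∑ V ∈ W.powerset,
        ∑ p ∈ (W.powerset ×ˢ W.powerset).filter (fun p => p.1 ∪ p.2 = V),
          auxF ℓ p.1.card * auxF ℓ p.2.card from
      Finset.sum_congr rfl (fun V hV => by rw [hfix V hV]), hfib, hsq, auxCsum]
  rw [← Finset.add_sum_erase _ _ hWmem, ← Finset.add_sum_erase _ _ hWmem] at key
  have herase : ∀ V ∈ W.powerset.erase W,
      ∑ p ∈ (V.powerset ×ˢ V.powerset).filter (fun p => p.1 ∪ p.2 = V),
        auxF ℓ p.1.card * auxF ℓ p.2.card = auxC ℓ V.card := by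
    intro V hV
    obtain ⟨hne, hVW⟩ := Finset.mem_erase.mp hV
    rw [Finset.mem_powerset] at hVW
    exact ih V (lt_of_le_of_ne hVW hne) ((Finset.card_le_card hVW).trans hW)
  rw [Finset.sum_congr rfl herase] at key
  linarith
/-- If `Y` is a PSD matrix indexed by subsets of `[n]` of size at most `ℓ` with
`Y[∅,∅] = 1`, entries depending only on the union of the indices, and
`0 ≤ Y[S,T] ≤ Y[∅,T]`, and if `Z_i = Σ_{|W|=i} y_W` vanishes for all `ℓ < i ≤ 2ℓ`,
then `Z_1 ≤ ℓ`. -/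
theorem stmt_13 (n ℓ : ℕ) (hl : 1 ≤ ℓ)
    (Y : Matrix {S : Finset (Fin n) // S.card ≤ ℓ} {S : Finset (Fin n) // S.card ≤ ℓ} ℝ)
    (hpsd : Y.PosSemidef)
    (hone : Y ⟨∅, by simp⟩ ⟨∅, by simp⟩ = 1)
    (hinv : ∀ S T S' T', S.1 ∪ T.1 = S'.1 ∪ T'.1 → Y S T = Y S' T')
    (hbd : ∀ S T, 0 ≤ Y S T ∧ Y S T ≤ Y ⟨∅, by simp⟩ T)
    (y : Finset (Fin n) → ℝ)
    (hy : ∀ S T : {S : Finset (Fin n) // S.card ≤ ℓ}, y (S.1 ∪ T.1) = Y S T)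
    (Z : ℕ → ℝ)
    (hZ : ∀ i, Z i = ∑ W ∈ Finset.univ.filter (fun W : Finset (Fin n) => W.card = i), y W)
    (hzero : ∀ i, ℓ < i → i ≤ 2 * ℓ → Z i = 0) :
    Z 1 ≤ (ℓ : ℝ) := by
  classical
  -- decomposition of small sets into unions of two legal index sets
  have hdecomp : ∀ W : Finset (Fin n), W.card ≤ 2 * ℓ →
      ∃ S T : {S : Finset (Fin n) // S.card ≤ ℓ}, S.1 ∪ T.1 = W := by
    intro W hW
    obtain ⟨S, hSW, hScard⟩ := Finset.exists_subset_card_eq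
      (min_le_right ℓ W.card : min ℓ W.card ≤ W.card)
    have h1 : S.card ≤ ℓ := by omega
    have h2 : (W \ S).card ≤ ℓ := by rw [Finset.card_sdiff_of_subset hSW]; omega
    exact ⟨⟨S, h1⟩, ⟨W \ S, h2⟩, Finset.union_sdiff_of_subset hSW⟩
  have hynn : ∀ W : Finset (Fin n), W.card ≤ 2 * ℓ → 0 ≤ y W := by
    intro W hW
    obtain ⟨S, T, hST⟩ := hdecomp W hW
    rw [← hST, hy S T]
    exact (hbd S T).1
  have hy0 : ∀ W : Finset (Fin n), ℓ < W.card → W.card ≤ 2 * ℓ → y W = 0 := by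
    intro W h1 h2
    have hz := hzero W.card h1 h2
    rw [hZ] at hz
    refine (Finset.sum_eq_zero_iff_of_nonneg ?_).mp hz W ?_
    · intro W' hW'
      rw [Finset.mem_filter] at hW'
      exact hynn W' (hW'.2 ▸ h2)
    · simp
  have hyempty : y (∅ : Finset (Fin n)) = 1 := by
    have := hy ⟨∅, by simp⟩ ⟨∅, by simp⟩
    simpa [hone] using this
  -- the quadratic form
  set x : {S : Finset (Fin n) // S.card ≤ ℓ} → ℝ := fun S => auxF ℓ S.1.card with hx
  have hq : (0 : ℝ) ≤ ∑ S : {S : Finset (Fin n) // S.card ≤ ℓ},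
      ∑ T : {S : Finset (Fin n) // S.card ≤ ℓ},
        auxF ℓ S.1.card * auxF ℓ T.1.card * y (S.1 ∪ T.1) := by
    have h := hpsd.dotProduct_mulVec_nonneg x
    simp only [dotProduct, Matrix.mulVec, Pi.star_apply, star_trivial,
      Finset.mul_sum] at h
    refine le_trans h (le_of_eq (Finset.sum_congr rfl fun S _ =>
      Finset.sum_congr rfl fun T _ => ?_))
    rw [hy S T]
    ring
  set A : Finset (Finset (Fin n)) :=
    Finset.univ.filter (fun S : Finset (Fin n) => S.card ≤ ℓ) with hA
  have hAmem : ∀ S : Finset (Fin n), S ∈ A ↔ S.card ≤ ℓ := by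
    intro S; simp [hA]
  set g : Finset (Fin n) → Finset (Fin n) → ℝ :=
    fun S T => auxF ℓ S.card * auxF ℓ T.card * y (S ∪ T) with hg
  have e1 : ∑ S ∈ A, ∑ T ∈ A, g S T
      = ∑ S : {S : Finset (Fin n) // S.card ≤ ℓ},
          ∑ T : {S : Finset (Fin n) // S.card ≤ ℓ}, g S.1 T.1 := by
    rw [Finset.sum_subtype A hAmem (fun S => ∑ T ∈ A, g S T)]
    exact Finset.sum_congr rfl (fun S _ => Finset.sum_subtype A hAmem (fun T => g S.1 T))
  have hq2 : (0 : ℝ) ≤ ∑ p ∈ A ×ˢ A, g p.1 p.2 := by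
    rw [Finset.sum_product, e1]
    exact hq
  set B : Finset (Finset (Fin n) × Finset (Fin n)) :=
    (A ×ˢ A).filter (fun p => (p.1 ∪ p.2).card ≤ ℓ) with hB
  have e2 : ∑ p ∈ A ×ˢ A, g p.1 p.2 = ∑ p ∈ B, g p.1 p.2 := by
    refine (Finset.sum_subset (Finset.filter_subset _ _) ?_).symm
    intro p hp hpB
    have hp' := Finset.mem_product.mp hp
    have hc1 := (hAmem p.1).mp hp'.1
    have hc2 := (hAmem p.2).mp hp'.2
    have hgt : ℓ < (p.1 ∪ p.2).card := by
      by_contra hle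
      exact hpB (Finset.mem_filter.mpr ⟨hp, by omega⟩)
    have hle2 : (p.1 ∪ p.2).card ≤ 2 * ℓ :=
      le_trans (Finset.card_union_le p.1 p.2) (by omega)
    simp [hg, hy0 _ hgt hle2]
  have hmaps : ∀ p ∈ B, p.1 ∪ p.2 ∈ A := by
    intro p hp
    rw [hB, Finset.mem_filter] at hp
    exact (hAmem _).mpr hp.2
  have e3 : ∑ W ∈ A, ∑ p ∈ B.filter (fun p => p.1 ∪ p.2 = W), g p.1 p.2
      = ∑ p ∈ B, g p.1 p.2 := Finset.sum_fiberwise_of_maps_to hmaps _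
  have e4 : ∀ W ∈ A, ∑ p ∈ B.filter (fun p => p.1 ∪ p.2 = W), g p.1 p.2
      = auxC ℓ W.card * y W := by
    intro W hW
    have hWc := (hAmem W).mp hW
    have hfilt : B.filter (fun p => p.1 ∪ p.2 = W)
        = (W.powerset ×ˢ W.powerset).filter (fun p => p.1 ∪ p.2 = W) := by
      ext p
      simp only [hB, Finset.mem_filter, Finset.mem_product, Finset.mem_powerset, hAmem]
      constructor
      · rintro ⟨⟨_, _⟩, hu⟩
        exact ⟨⟨hu ▸ Finset.subset_union_left, hu ▸ Finset.subset_union_right⟩, hu⟩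
      · rintro ⟨⟨h1, h2⟩, hu⟩
        exact ⟨⟨⟨(Finset.card_le_card h1).trans hWc, (Finset.card_le_card h2).trans hWc⟩,
          hu ▸ hWc⟩, hu⟩
    rw [hfilt]
    have : ∀ p ∈ (W.powerset ×ˢ W.powerset).filter (fun p => p.1 ∪ p.2 = W),
        g p.1 p.2 = auxF ℓ p.1.card * auxF ℓ p.2.card * y W := by
      intro p hp
      show auxF ℓ p.1.card * auxF ℓ p.2.card * y (p.1 ∪ p.2)
        = auxF ℓ p.1.card * auxF ℓ p.2.card * y W
      rw [(Finset.mem_filter.mp hp).2]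
    rw [Finset.sum_congr rfl this, ← Finset.sum_mul, auxUnion ℓ W hWc]
  have e5 : ∑ W ∈ A, auxC ℓ W.card * y W
      = (ℓ : ℝ) ^ 2 * y ∅ + (-(ℓ : ℝ)) * Z 1 := by
    have eext : ∑ W ∈ A, auxC ℓ W.card * y W
        = ∑ W : Finset (Fin n), auxC ℓ W.card * y W := by
      refine Finset.sum_subset (Finset.subset_univ A) ?_
      intro W _ hWA
      have : ℓ < W.card := by
        by_contra hle
        exact hWA ((hAmem W).mpr (by omega))
      have h0 : W.card ≠ 0 := by omega
      have h1' : W.card ≠ 1 := by omega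
      simp [auxC, h0, h1']
    rw [eext]
    have hpt : ∀ W : Finset (Fin n), auxC ℓ W.card * y W
        = (if W = ∅ then (ℓ : ℝ) ^ 2 * y W else 0)
          + (if W.card = 1 then -(ℓ : ℝ) * y W else 0) := by
      intro W
      by_cases h0 : W = ∅
      · simp [auxC, h0]
      · have hc0 : W.card ≠ 0 := fun h => h0 (Finset.card_eq_zero.mp h)
        by_cases h1 : W.card = 1 <;> simp [auxC, h0, h1, hc0]
    rw [Finset.sum_congr rfl (fun W _ => hpt W), Finset.sum_add_distrib,
      Finset.sum_ite_eq' Finset.univ (∅ : Finset (Fin n)) (fun W => (ℓ : ℝ) ^ 2 * y W),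
      if_pos (Finset.mem_univ _)]
    congr 1
    rw [← Finset.sum_filter, hZ 1, Finset.mul_sum]
  have hfinal : (0 : ℝ) ≤ (ℓ : ℝ) ^ 2 - (ℓ : ℝ) * Z 1 := by
    have := hq2
    rw [e2, ← e3, Finset.sum_congr rfl e4, e5, hyempty] at this
    linarith
  have hlpos : (0 : ℝ) < (ℓ : ℝ) := by exact_mod_cast hl
  nlinarith
end

section
/- Let ℓ ≥ 1, p ≥ ℓ, and let Y be a real symmetric positive semidefinite matrix indexed by subsets of [n] of size at most ℓ with Y[∅,∅] = 1, Y[S,T] = Y[S',T'] whenever S∪T = S'∪T', and Y[S,T] ≥ 0 for all S,T. Define y_W for |W| ≤ 2ℓ and Z_i = Σ_{|W|=i} y_W as above. If Z_{i+1} ≤ ((p−i)/(i+1)) Z_i for all i with ℓ ≤ i ≤ 2ℓ−1, then Z_i ≤ C(p,i) for all i ∈ 1,...,2ℓ; in particular Z_1 ≤ p. -/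
open Finset Matrix


lemma aux_count {α : Type*} [DecidableEq α] [Fintype α] (a : ℕ) (U : Finset α) :
    (((univ.filter (fun S : Finset α => S.card = a)) ×ˢ
        (univ.filter (fun S : Finset α => S.card = a))).filter
      (fun q => q.1 ∪ q.2 = U)).card = U.card.choose a * a.choose (U.card - a) := by
  have hcard : ((U.powersetCard a).sigma (fun S => S.powersetCard (U.card - a))).card
      = U.card.choose a * a.choose (U.card - a) := by
    rw [card_sigma]
    rw [Finset.sum_congr rfl (fun S hS => ?_), Finset.sum_const, card_powersetCard,
      smul_eq_mul]
    rw [card_powersetCard, (mem_powersetCard.mp hS).2]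
  rw [← hcard]
  apply Finset.card_bij' (i := fun q _ => (⟨q.1, q.1 \ q.2⟩ : Σ _ : Finset α, Finset α))
    (j := fun x _ => (x.1, U \ x.2))
  · rintro ⟨S, T⟩ hq
    simp only [mem_filter, mem_product, mem_filter, mem_univ, true_and] at hq
    obtain ⟨⟨hS, hT⟩, hU⟩ := hq
    have hSU : S ⊆ U := hU ▸ subset_union_left
    have hdisj : Disjoint (S \ T) T := sdiff_disjoint
    have hcard2 : (S \ T).card + T.card = U.card := by
      rw [← card_union_of_disjoint hdisj, sdiff_union_self_eq_union, hU]
    simp only [mem_sigma, mem_powersetCard]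
    refine ⟨⟨hSU, hS⟩, sdiff_subset, ?_⟩
    omega
  · rintro ⟨S, J⟩ hx
    simp only [mem_sigma, mem_powersetCard] at hx
    obtain ⟨⟨hSU, hS⟩, hJS, hJ⟩ := hx
    have haU : a ≤ U.card := hS ▸ card_le_card hSU
    have hJU : J ⊆ U := hJS.trans hSU
    simp only [mem_filter, mem_product, mem_filter, mem_univ, true_and]
    refine ⟨⟨hS, ?_⟩, ?_⟩
    · rw [card_sdiff_of_subset hJU]; omega
    · ext x
      simp only [mem_union, mem_sdiff]
      constructor
      · rintro (h | ⟨h, _⟩) 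
        · exact hSU h
        · exact h
      · intro hxU
        by_cases hxJ : x ∈ J
        · exact Or.inl (hJS hxJ)
        · exact Or.inr ⟨hxU, hxJ⟩
  · rintro ⟨S, T⟩ hq
    simp only [mem_filter, mem_product, mem_filter, mem_univ, true_and] at hq
    obtain ⟨⟨hS, hT⟩, hU⟩ := hq
    have : U \ (S \ T) = T := by
      ext x
      simp only [mem_sdiff]
      constructor
      · rintro ⟨hxU, hx⟩
        by_cases hxT : x ∈ T
        · exact hxT
        · have hxST : x ∈ S ∪ T := hU ▸ hxU
          rw [mem_union] at hxST
          exact absurd ⟨hxST.resolve_right hxT, hxT⟩ hx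
      · intro hxT
        exact ⟨hU ▸ mem_union_right _ hxT, fun h => h.2 hxT⟩
    simp [this]
  · rintro ⟨S, J⟩ hx
    simp only [mem_sigma, mem_powersetCard] at hx
    obtain ⟨⟨hSU, hS⟩, hJS, hJ⟩ := hx
    have : S \ (U \ J) = J := by
      ext x
      simp only [mem_sdiff, not_and, not_not]
      constructor
      · rintro ⟨hxS, hx⟩
        exact hx (hSU hxS)
      · intro hxJ
        exact ⟨hJS hxJ, fun _ => hxJ⟩
    simp [this]

lemma aux_sum_pairs {α : Type*} [DecidableEq α] [Fintype α] (a : ℕ) (f : Finset α → ℝ) :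
    ∑ V ∈ univ.filter (fun S : Finset α => S.card = a),
      ∑ W ∈ univ.filter (fun S : Finset α => S.card = a), f (V ∪ W)
    = ∑ U : Finset α, (U.card.choose a * a.choose (U.card - a) : ℝ) * f U := by
  rw [← Finset.sum_product']
  rw [← Finset.sum_fiberwise_of_maps_to (g := fun q : Finset α × Finset α => q.1 ∪ q.2)
    (t := univ) (fun _ _ => mem_univ _)]
  apply Finset.sum_congr rfl
  intro U _
  have : ∀ q ∈ ((univ.filter (fun S : Finset α => S.card = a)) ×ˢ
      (univ.filter (fun S : Finset α => S.card = a))).filter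
      (fun q : Finset α × Finset α => q.1 ∪ q.2 = U), f (q.1 ∪ q.2) = f U := by
    intro q hq
    rw [(mem_filter.mp hq).2]
  rw [Finset.sum_congr rfl this, Finset.sum_const, aux_count, nsmul_eq_mul, Nat.cast_mul]

lemma aux_card_filter_card {α : Type*} [DecidableEq α] [Fintype α] (w : ℕ) :
    (univ.filter (fun S : Finset α => S.card = w)).card = (Fintype.card α).choose w := by
  have : (univ.filter (fun S : Finset α => S.card = w)) = (univ : Finset α).powersetCard w := by
    ext S
    simp [Finset.mem_powersetCard]
  rw [this, card_powersetCard, Finset.card_univ]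

lemma aux_group_card {α : Type*} [DecidableEq α] [Fintype α] (g : ℕ → ℝ) (h : Finset α → ℝ)
    (N : ℕ) (hN : Fintype.card α < N) :
    ∑ U : Finset α, g U.card * h U
      = ∑ w ∈ Finset.range N, g w * ∑ U ∈ univ.filter (fun S : Finset α => S.card = w), h U := by
  rw [← Finset.sum_fiberwise_of_maps_to (g := fun U : Finset α => U.card) (t := Finset.range N)
    (fun U _ => by
      simp only [Finset.mem_range]
      exact lt_of_le_of_lt (by simpa using card_le_card (subset_univ U)) hN)]
  apply Finset.sum_congr rfl
  intro w _
  rw [Finset.mul_sum]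
  apply Finset.sum_congr (by ext U; simp) ?_
  intro U hU
  rw [(mem_filter.mp hU).2]

lemma aux_identity (p a N : ℕ) (hp : p < N) (ha : 2 * a < N) :
    ∑ w ∈ Finset.range N, ((w.choose a * a.choose (w - a) : ℕ) : ℝ) * (p.choose w : ℝ)
      = ((p.choose a : ℕ) : ℝ) ^ 2 := by
  have key := aux_sum_pairs (α := Fin p) a (fun _ => (1 : ℝ))
  simp only [mul_one, Finset.sum_const, nsmul_eq_mul] at key
  -- LHS of key
  rw [aux_card_filter_card] at key
  simp only [Fintype.card_fin] at key
  have key2 : ∑ U : Finset (Fin p), ((U.card.choose a * a.choose (U.card - a) : ℕ) : ℝ)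
      = ∑ w ∈ Finset.range N,
        ((w.choose a * a.choose (w - a) : ℕ) : ℝ) * ((p.choose w : ℕ) : ℝ) := by
    have := aux_group_card (α := Fin p)
      (fun w => ((w.choose a * a.choose (w - a) : ℕ) : ℝ)) (fun _ => (1 : ℝ)) N
      (by simpa using hp)
    simp only [mul_one, Finset.sum_const, nsmul_eq_mul] at this
    rw [this]
    apply Finset.sum_congr rfl
    intro w _
    rw [aux_card_filter_card]
    simp
  push_cast at key key2 ⊢
  rw [← key2, ← key]
  ring


lemma aux_psd_cs {m : Type*} [Fintype m] (Y : Matrix m m ℝ) (h : Y.PosSemidef) (u v : m → ℝ) :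
    (u ⬝ᵥ Y.mulVec v) ^ 2 ≤ (u ⬝ᵥ Y.mulVec u) * (v ⬝ᵥ Y.mulVec v) := by
  have hsymm : v ⬝ᵥ Y.mulVec u = u ⬝ᵥ Y.mulVec v := by
    rw [Matrix.dotProduct_mulVec, ← Matrix.mulVec_transpose]
    rw [show Yᵀ = Y from ?_]
    · exact dotProduct_comm _ _
    · have := h.1
      rw [Matrix.IsHermitian] at this
      simpa using this
  have hquad : ∀ t : ℝ, 0 ≤ (v ⬝ᵥ Y.mulVec v) * (t * t) + (2 * (u ⬝ᵥ Y.mulVec v)) * t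
      + (u ⬝ᵥ Y.mulVec u) := by
    intro t
    have h0 := h.dotProduct_mulVec_nonneg (u + t • v)
    have expand : (u + t • v) ⬝ᵥ Y.mulVec (u + t • v)
        = (v ⬝ᵥ Y.mulVec v) * (t * t) + (2 * (u ⬝ᵥ Y.mulVec v)) * t + (u ⬝ᵥ Y.mulVec u) := by
      rw [Matrix.mulVec_add, Matrix.mulVec_smul, dotProduct_add, add_dotProduct,
        add_dotProduct, dotProduct_smul, smul_dotProduct,
        smul_dotProduct, dotProduct_smul, hsymm]
      ring_nf
    simp only [star_trivial] at h0
    rw [expand] at h0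
    exact h0
  have hd := discrim_le_zero hquad
  rw [discrim] at hd
  nlinarith [hd]

/-- If `Y` is a PSD matrix indexed by subsets of `[n]` of size at most `ℓ` with
`Y[∅,∅] = 1`, nonnegative entries depending only on the union of the indices, and if
`Z_{i+1} ≤ ((p−i)/(i+1)) Z_i` for all `ℓ ≤ i ≤ 2ℓ−1` (where `p ≥ ℓ`), then
`Z_i ≤ C(p,i)` for all `1 ≤ i ≤ 2ℓ`; in particular `Z_1 ≤ p`. -/
theorem stmt_14 (n ℓ p : ℕ) (hl : 1 ≤ ℓ) (hp : ℓ ≤ p)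
    (Y : Matrix {S : Finset (Fin n) // S.card ≤ ℓ} {S : Finset (Fin n) // S.card ≤ ℓ} ℝ)
    (hpsd : Y.PosSemidef)
    (hone : Y ⟨∅, by simp⟩ ⟨∅, by simp⟩ = 1)
    (hinv : ∀ S T S' T', S.1 ∪ T.1 = S'.1 ∪ T'.1 → Y S T = Y S' T')
    (hnonneg : ∀ S T, 0 ≤ Y S T)
    (y : Finset (Fin n) → ℝ)
    (hy : ∀ S T : {S : Finset (Fin n) // S.card ≤ ℓ}, y (S.1 ∪ T.1) = Y S T)
    (Z : ℕ → ℝ)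
    (hZ : ∀ i, Z i = ∑ W ∈ Finset.univ.filter (fun W : Finset (Fin n) => W.card = i), y W)
    (hratio : ∀ i, ℓ ≤ i → i ≤ 2 * ℓ - 1 → Z (i + 1) ≤ (((p : ℝ) - i) / (i + 1)) * Z i) :
    (∀ i, 1 ≤ i → i ≤ 2 * ℓ → Z i ≤ (Nat.choose p i : ℝ)) ∧ Z 1 ≤ (p : ℝ) := by
  classical
  set N : ℕ := n + p + 2 * ℓ + 1 with hNdef
  have hnN : n < N := by omega
  have hpN : p < N := by omega
  have hlN : 2 * ℓ < N := by omega
  have hel : (∅ : Finset (Fin n)).card ≤ ℓ := by simp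
  -- nonnegativity of y on small sets
  have ynonneg : ∀ W : Finset (Fin n), W.card ≤ 2 * ℓ → 0 ≤ y W := by
    intro W hW
    obtain ⟨S, hSsub, hScard⟩ := Finset.exists_subset_card_eq (s := W) (n := min ℓ W.card) (min_le_right _ _)
    have h1 : S.card ≤ ℓ := by omega
    have hsd := Finset.card_sdiff_of_subset hSsub
    have h2 : (W \ S).card ≤ ℓ := by omega
    have hu : S ∪ W \ S = W := Finset.union_sdiff_of_subset hSsub
    have := hy ⟨S, h1⟩ ⟨W \ S, h2⟩
    simp only [hu] at this
    rw [this]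
    exact hnonneg _ _
  have Znonneg : ∀ i, i ≤ 2 * ℓ → 0 ≤ Z i := by
    intro i hi
    rw [hZ]
    apply Finset.sum_nonneg
    intro W hW
    exact ynonneg W (by rw [(Finset.mem_filter.mp hW).2]; exact hi)
  have hCl : (0:ℝ) < (p.choose ℓ : ℝ) := by exact_mod_cast Nat.choose_pos hp
  -- sum over subtype = sum over filtered sets
  have subconv : ∀ f : Finset (Fin n) → ℝ,
      (∑ S : {S : Finset (Fin n) // S.card ≤ ℓ}, f S.1)
        = ∑ W ∈ Finset.univ.filter (fun W : Finset (Fin n) => W.card ≤ ℓ), f W := by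
    intro f
    exact (Finset.sum_subtype _ (by simp) f).symm
  have filter_eq : ∀ a, a ≤ ℓ →
      (Finset.univ.filter (fun W : Finset (Fin n) => W.card ≤ ℓ)).filter
          (fun W => W.card = a)
        = Finset.univ.filter (fun W : Finset (Fin n) => W.card = a) := by
    intro a ha
    ext W
    simp only [Finset.mem_filter, Finset.mem_univ, true_and]
    constructor
    · rintro ⟨_, h⟩; exact h
    · intro h; exact ⟨by omega, h⟩
  -- the Cauchy-Schwarz inequality
  have hcs : ∀ a, a ≤ ℓ → (Z a)^2 ≤ ∑ w ∈ Finset.range N,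
      ((w.choose a * a.choose (w - a) : ℕ) : ℝ) * Z w := by
    intro a ha
    set u : {S : Finset (Fin n) // S.card ≤ ℓ} → ℝ :=
      fun S => if S.1.card = a then 1 else 0 with hu
    set v : {S : Finset (Fin n) // S.card ≤ ℓ} → ℝ :=
      fun S => if S = ⟨∅, hel⟩ then 1 else 0 with hv
    have hmv : Y.mulVec v = fun S => Y S ⟨∅, hel⟩ := by
      funext S
      simp [Matrix.mulVec, hv, dotProduct, mul_ite, mul_one, mul_zero,
        Finset.sum_ite_eq']
    have hBvv : v ⬝ᵥ Y.mulVec v = 1 := by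
      rw [hmv]
      have : v ⬝ᵥ (fun S => Y S ⟨∅, hel⟩) = Y ⟨∅, hel⟩ ⟨∅, hel⟩ := by
        simp [hv, dotProduct, ite_mul, one_mul, zero_mul, Finset.sum_ite_eq']
      rw [this]
      exact hone
    have hBuv : u ⬝ᵥ Y.mulVec v = Z a := by
      rw [hmv]
      have h1 : u ⬝ᵥ (fun S => Y S ⟨∅, hel⟩)
          = ∑ S : {S : Finset (Fin n) // S.card ≤ ℓ},
              (fun W : Finset (Fin n) => if W.card = a then y W else 0) S.1 := by
        simp only [dotProduct]
        apply Finset.sum_congr rfl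
        intro S _
        have hye : y (S.1 ∪ (⟨∅, hel⟩ : {S : Finset (Fin n) // S.card ≤ ℓ}).1)
            = Y S ⟨∅, hel⟩ := hy S ⟨∅, hel⟩
        rw [show (⟨∅, hel⟩ : {S : Finset (Fin n) // S.card ≤ ℓ}).1 = ∅ from rfl,
          Finset.union_empty] at hye
        by_cases h : S.1.card = a <;> simp [hu, h, hye]
      rw [h1, subconv (fun W : Finset (Fin n) => if W.card = a then y W else 0),
        ← Finset.sum_filter, filter_eq a ha, ← hZ]
    have hBuu : u ⬝ᵥ Y.mulVec u = ∑ w ∈ Finset.range N,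
        ((w.choose a * a.choose (w - a) : ℕ) : ℝ) * Z w := by
      have expand : u ⬝ᵥ Y.mulVec u
          = ∑ S : {S : Finset (Fin n) // S.card ≤ ℓ},
              ∑ T : {S : Finset (Fin n) // S.card ≤ ℓ}, u S * (Y S T * u T) := by
        simp only [dotProduct, Matrix.mulVec, Finset.mul_sum]
      have hterm : ∀ S T : {S : Finset (Fin n) // S.card ≤ ℓ},
          u S * (Y S T * u T)
            = if S.1.card = a then (if T.1.card = a then y (S.1 ∪ T.1) else 0) else 0 := by
        intro S T
        by_cases h1 : S.1.card = a
        · by_cases h2 : T.1.card = a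
          · simp only [hu, h1, h2, if_true]
            rw [one_mul, mul_one, ← hy S T]
          · simp [hu, h1, h2]
        · simp [hu, h1]
      have step1 : u ⬝ᵥ Y.mulVec u
          = ∑ S : {S : Finset (Fin n) // S.card ≤ ℓ},
              (fun V : Finset (Fin n) => if V.card = a then
                (∑ T : {S : Finset (Fin n) // S.card ≤ ℓ},
                  (if T.1.card = a then y (V ∪ T.1) else 0)) else 0) S.1 := by
        rw [expand]
        apply Finset.sum_congr rfl
        intro S _
        rw [Finset.sum_congr rfl (fun T _ => hterm S T)]
        by_cases h : S.1.card = a <;> simp [h]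
      rw [step1]
      have step2 : ∀ V : Finset (Fin n),
          (∑ T : {S : Finset (Fin n) // S.card ≤ ℓ},
            (if T.1.card = a then y (V ∪ T.1) else 0))
          = ∑ W ∈ Finset.univ.filter (fun W : Finset (Fin n) => W.card = a), y (V ∪ W) := by
        intro V
        rw [show (∑ T : {S : Finset (Fin n) // S.card ≤ ℓ},
            (if T.1.card = a then y (V ∪ T.1) else 0))
          = ∑ T : {S : Finset (Fin n) // S.card ≤ ℓ},
            (fun W : Finset (Fin n) => if W.card = a then y (V ∪ W) else 0) T.1 from rfl]
        rw [subconv (fun W : Finset (Fin n) => if W.card = a then y (V ∪ W) else 0),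
          ← Finset.sum_filter, filter_eq a ha]
      refine (subconv (fun V : Finset (Fin n) => if V.card = a then
        (∑ T : {S : Finset (Fin n) // S.card ≤ ℓ},
          (if T.1.card = a then y (V ∪ T.1) else 0)) else 0)).trans ?_
      refine ((Finset.sum_filter _ _).symm).trans ?_
      rw [filter_eq a ha]
      rw [Finset.sum_congr rfl (fun V _ => step2 V)]
      rw [aux_sum_pairs a y]
      have step3 : ∑ U : Finset (Fin n),
          ((U.card.choose a : ℝ) * (a.choose (U.card - a) : ℝ)) * y U
          = ∑ w ∈ Finset.range N, ((w.choose a * a.choose (w - a) : ℕ) : ℝ) * Z w := by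
        have hgc := aux_group_card
          (fun w => ((w.choose a * a.choose (w - a) : ℕ) : ℝ)) y N (by simpa using hnN)
        calc ∑ U : Finset (Fin n), ((U.card.choose a : ℝ) * (a.choose (U.card - a) : ℝ)) * y U
            = ∑ U : Finset (Fin n),
                (fun w => ((w.choose a * a.choose (w - a) : ℕ) : ℝ)) U.card * y U := by
              apply Finset.sum_congr rfl; intro U _; push_cast; ring
          _ = ∑ w ∈ Finset.range N, ((w.choose a * a.choose (w - a) : ℕ) : ℝ) *
                ∑ W ∈ Finset.univ.filter (fun W : Finset (Fin n) => W.card = w), y W := hgc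
          _ = ∑ w ∈ Finset.range N, ((w.choose a * a.choose (w - a) : ℕ) : ℝ) * Z w := by
              apply Finset.sum_congr rfl; intro w _; rw [← hZ]
      rw [← step3]
    have hCS := aux_psd_cs Y hpsd u v
    rw [hBuv, hBvv, hBuu, mul_one] at hCS
    exact hCS
  -- chain bound from level ℓ upward
  have hchain : ∀ w, ℓ ≤ w → w ≤ 2 * ℓ → Z w * (p.choose ℓ : ℝ) ≤ (p.choose w : ℝ) * Z ℓ := by
    intro w hw
    induction w, hw using Nat.le_induction with
    | base => intro _; rw [mul_comm]
    | succ w hw ih =>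
      intro h2
      have hr := hratio w hw (by omega)
      have ihw := ih (by omega)
      have hZwnn := Znonneg w (by omega)
      by_cases hpw : w ≤ p
      · have hwp : (w : ℝ) ≤ (p : ℝ) := by exact_mod_cast hpw
        have hfac : (0:ℝ) ≤ ((p:ℝ) - w) / ((w:ℝ) + 1) := by
          apply div_nonneg (by linarith) (by positivity)
        have step1 : Z (w+1) * (p.choose ℓ : ℝ)
            ≤ (((p:ℝ) - w) / ((w:ℝ)+1) * Z w) * (p.choose ℓ : ℝ) :=
          mul_le_mul_of_nonneg_right hr hCl.le
        have step2 : (((p:ℝ) - w) / ((w:ℝ)+1) * Z w) * (p.choose ℓ : ℝ)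
            = (((p:ℝ) - w) / ((w:ℝ)+1)) * (Z w * (p.choose ℓ : ℝ)) := by ring
        have step3 : (((p:ℝ) - w) / ((w:ℝ)+1)) * (Z w * (p.choose ℓ : ℝ))
            ≤ (((p:ℝ) - w) / ((w:ℝ)+1)) * ((p.choose w : ℝ) * Z ℓ) :=
          mul_le_mul_of_nonneg_left ihw hfac
        have h0 : (p.choose (w+1) * (w + 1) : ℕ) = p.choose w * (p - w) :=
          Nat.choose_succ_right_eq p w
        have h1 : (p.choose (w+1) : ℝ) * ((w:ℝ) + 1) = (p.choose w : ℝ) * ((p:ℝ) - w) := by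
          have := congrArg (Nat.cast : ℕ → ℝ) h0
          push_cast [Nat.cast_sub hpw] at this
          linarith
        have step4 : (((p:ℝ) - w) / ((w:ℝ)+1)) * ((p.choose w : ℝ) * Z ℓ)
            = (p.choose (w+1) : ℝ) * Z ℓ := by
          rw [div_mul_eq_mul_div, div_eq_iff (by positivity : ((w:ℝ)+1) ≠ 0)]
          linear_combination (-(Z ℓ)) * h1
        linarith [step1, step2, step3, step4]
      · have hCw : p.choose w = 0 := Nat.choose_eq_zero_of_lt (by omega)
        have hZw0 : Z w = 0 := by
          rw [hCw] at ihw
          push_cast at ihw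
          nlinarith
        have hZ1 : Z (w+1) ≤ 0 := by
          rw [hZw0] at hr
          simpa using hr
        have hCw1 : p.choose (w+1) = 0 := Nat.choose_eq_zero_of_lt (by omega)
        rw [hCw1]
        push_cast
        nlinarith
  -- base: Z ℓ ≤ C(p, ℓ)
  have hbase : Z ℓ ≤ (p.choose ℓ : ℝ) := by
    have hc := hcs ℓ le_rfl
    have hms : ∀ w ∈ Finset.range N,
        ((w.choose ℓ * ℓ.choose (w - ℓ) : ℕ) : ℝ) * Z w * (p.choose ℓ : ℝ)
          ≤ ((w.choose ℓ * ℓ.choose (w - ℓ) : ℕ) : ℝ) * ((p.choose w : ℝ) * Z ℓ) := by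
      intro w _
      rcases lt_or_ge w ℓ with h | h
      · have : w.choose ℓ = 0 := Nat.choose_eq_zero_of_lt h
        simp [this]
      · rcases le_or_gt w (2 * ℓ) with h2 | h2
        · have hcw := hchain w h h2
          have cnn : (0:ℝ) ≤ ((w.choose ℓ * ℓ.choose (w - ℓ) : ℕ) : ℝ) := Nat.cast_nonneg _
          calc ((w.choose ℓ * ℓ.choose (w - ℓ) : ℕ) : ℝ) * Z w * (p.choose ℓ : ℝ)
              = ((w.choose ℓ * ℓ.choose (w - ℓ) : ℕ) : ℝ) * (Z w * (p.choose ℓ : ℝ)) := by ring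
            _ ≤ _ := mul_le_mul_of_nonneg_left hcw cnn
        · have : ℓ.choose (w - ℓ) = 0 := Nat.choose_eq_zero_of_lt (by omega)
          simp [this]
    have hsum1 : (Z ℓ)^2 * (p.choose ℓ : ℝ)
        ≤ (∑ w ∈ Finset.range N, ((w.choose ℓ * ℓ.choose (w - ℓ) : ℕ) : ℝ) * Z w)
            * (p.choose ℓ : ℝ) := mul_le_mul_of_nonneg_right hc hCl.le
    have hsum2 : (∑ w ∈ Finset.range N, ((w.choose ℓ * ℓ.choose (w - ℓ) : ℕ) : ℝ) * Z w)
            * (p.choose ℓ : ℝ)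
        ≤ ∑ w ∈ Finset.range N,
            ((w.choose ℓ * ℓ.choose (w - ℓ) : ℕ) : ℝ) * ((p.choose w : ℝ) * Z ℓ) := by
      rw [Finset.sum_mul]
      exact Finset.sum_le_sum hms
    have hsum3 : ∑ w ∈ Finset.range N,
          ((w.choose ℓ * ℓ.choose (w - ℓ) : ℕ) : ℝ) * ((p.choose w : ℝ) * Z ℓ)
        = ((p.choose ℓ : ℝ))^2 * Z ℓ := by
      have hcongr : ∀ w ∈ Finset.range N,
          ((w.choose ℓ * ℓ.choose (w - ℓ) : ℕ) : ℝ) * ((p.choose w : ℝ) * Z ℓ)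
          = (((w.choose ℓ * ℓ.choose (w - ℓ) : ℕ) : ℝ) * (p.choose w : ℝ)) * Z ℓ := by
        intro w _; ring
      rw [Finset.sum_congr rfl hcongr, ← Finset.sum_mul, aux_identity p ℓ N hpN hlN]
    have hZl := Znonneg ℓ (by omega)
    have hq : Z ℓ ^ 2 ≤ (p.choose ℓ : ℝ) * Z ℓ := by
      have h := hsum1.trans (hsum2.trans (le_of_eq hsum3))
      have h2 : Z ℓ ^ 2 * (p.choose ℓ:ℝ) ≤ ((p.choose ℓ:ℝ) * Z ℓ) * (p.choose ℓ:ℝ) :=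
        h.trans_eq (by ring)
      exact le_of_mul_le_mul_right h2 hCl
    rcases le_or_gt (Z ℓ) ((p.choose ℓ : ℝ)) with h | h
    · exact h
    · exfalso
      have hZpos : 0 < Z ℓ := hCl.trans h
      have := mul_lt_mul_of_pos_right h hZpos
      nlinarith [hq, this]
  -- downward induction
  have key : ∀ d a, a + d = ℓ → 1 ≤ a → ∀ w, a ≤ w → w ≤ 2 * ℓ → Z w ≤ (p.choose w : ℝ) := by
    intro d
    induction d with
    | zero =>
      intro a hae _ w hw h2
      have haℓ : a = ℓ := by omega
      subst haℓ
      have h1 := hchain w hw h2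
      have h2' : (p.choose w : ℝ) * Z a ≤ (p.choose w : ℝ) * (p.choose a : ℝ) :=
        mul_le_mul_of_nonneg_left hbase (Nat.cast_nonneg _)
      exact le_of_mul_le_mul_right (h1.trans h2') hCl
    | succ d ih =>
      intro a hae ha1 w hw h2
      have IH : ∀ w, a + 1 ≤ w → w ≤ 2 * ℓ → Z w ≤ (p.choose w : ℝ) :=
        ih (a+1) (by omega) (by omega)
      have hZa : Z a ≤ (p.choose a : ℝ) := by
        have hc := hcs a (by omega)
        have haN : a ∈ Finset.range N := Finset.mem_range.mpr (by omega)
        have hbound : ∀ w ∈ (Finset.range N).erase a,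
            ((w.choose a * a.choose (w - a) : ℕ) : ℝ) * Z w
              ≤ ((w.choose a * a.choose (w - a) : ℕ) : ℝ) * (p.choose w : ℝ) := by
          intro w hw'
          have hne := (Finset.mem_erase.mp hw').1
          rcases lt_or_ge w a with h | h
          · have : w.choose a = 0 := Nat.choose_eq_zero_of_lt h
            simp [this]
          · rcases le_or_gt w (2 * a) with h2' | h2'
            · have hZw := IH w (by omega) (by omega)
              exact mul_le_mul_of_nonneg_left hZw (Nat.cast_nonneg _)
            · have : a.choose (w - a) = 0 := Nat.choose_eq_zero_of_lt (by omega)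
              simp [this]
        have hca : ((a.choose a * a.choose (a - a) : ℕ) : ℝ) = 1 := by simp
        have hsplitZ : ∑ w ∈ Finset.range N, ((w.choose a * a.choose (w - a) : ℕ) : ℝ) * Z w
            = (∑ w ∈ (Finset.range N).erase a,
                ((w.choose a * a.choose (w - a) : ℕ) : ℝ) * Z w)
              + ((a.choose a * a.choose (a - a) : ℕ) : ℝ) * Z a :=
          (Finset.sum_erase_add _ _ haN).symm
        have e1 : (Z a)^2 ≤ (∑ w ∈ (Finset.range N).erase a,
            ((w.choose a * a.choose (w - a) : ℕ) : ℝ) * Z w) + Z a := by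
          rw [hsplitZ, hca, one_mul] at hc
          exact hc
        have e2 := Finset.sum_le_sum hbound
        have hid := aux_identity p a N hpN (by omega)
        have hsplitC : ∑ w ∈ Finset.range N,
              ((w.choose a * a.choose (w - a) : ℕ) : ℝ) * (p.choose w : ℝ)
            = (∑ w ∈ (Finset.range N).erase a,
                ((w.choose a * a.choose (w - a) : ℕ) : ℝ) * (p.choose w : ℝ))
              + ((a.choose a * a.choose (a - a) : ℕ) : ℝ) * (p.choose a : ℝ) :=
          (Finset.sum_erase_add _ _ haN).symm
        rw [hsplitC, hca, one_mul] at hid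
        have e3 : (∑ w ∈ (Finset.range N).erase a,
              ((w.choose a * a.choose (w - a) : ℕ) : ℝ) * (p.choose w : ℝ))
            = ((p.choose a : ℝ))^2 - (p.choose a : ℝ) := by
          push_cast at hid ⊢
          linarith
        have hBa : (1:ℝ) ≤ (p.choose a : ℝ) := by
          exact_mod_cast Nat.succ_le_of_lt (Nat.choose_pos (by omega))
        have hZann := Znonneg a (by omega)
        rcases le_or_gt (Z a) ((p.choose a : ℝ)) with h | h
        · exact h
        · exfalso
          have hE : (0:ℝ) < Z a + (p.choose a : ℝ) - 1 := by linarith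
          have hF : (Z a - (p.choose a : ℝ)) * (Z a + (p.choose a : ℝ) - 1) ≤ 0 := by
            nlinarith [e1, e2, e3]
          have hG : (0:ℝ) < (Z a - (p.choose a : ℝ)) * (Z a + (p.choose a : ℝ) - 1) :=
            mul_pos (by linarith) hE
          linarith
      rcases eq_or_lt_of_le hw with h | h
      · rw [← h]; exact hZa
      · exact IH w (by omega) h2
  constructor
  · intro i h1 h2
    exact key (ℓ - 1) 1 (by omega) le_rfl i h1 h2
  · have := key (ℓ - 1) 1 (by omega) le_rfl 1 le_rfl (by omega)
    rwa [Nat.choose_one_right] at this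
end
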